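/- Let R be a commutative ring, l ≥ 2, and sr(R) ≤ l−1. Then every Dennis–Vaserstein type decomposition in Sp(2l,R) can be made 'reduced': for all u ∈ U(2l,R), v ∈ U⁻(2l,R), h ∈ E(l,R), and q ∈ Ep(2l,R) with q·e₁ = e₁, there exist u' ∈ U(2l,R), v' ∈ U⁻(2l,R), and h' ∈ E(l,R) with (h')_{l,1} = 0 such that u·v·H(h)·q = u'·v'·H(h')·q. (This is the reduction step in the proof of Proposition 3.1, case Φ = C_l.) -/

import Mathlib

open Matrix

/-- A vector is *unimodular* if its entries generate the unit ideal of `R`. -/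
def Unimodular (R : Type*) [CommRing R] {ι : Type*} (v : ι → R) : Prop :=
  Ideal.span (Set.range v) = ⊤

/-- `sr(R) ≤ k`: for every `m ≥ k`, every unimodular column of height `m + 1` is stable. -/
def SRleq (R : Type*) [CommRing R] (k : ℕ) : Prop :=
  ∀ m : ℕ, k ≤ m → ∀ a : Fin (m + 1) → R, Unimodular R a →
    ∃ b : Fin m → R,
      Unimodular R fun i : Fin m => a i.castSucc + b i * a (Fin.last m)

/-- `𝔏(a)`: the intersection of all maximal ideals containing every entry of `a`
(`⊤ = R` if there is no such maximal ideal). -/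
def Lideal (R : Type*) [CommRing R] {ι : Type*} (a : ι → R) : Ideal R :=
  sInf {I : Ideal R | I.IsMaximal ∧ ∀ i, a i ∈ I}

/-- `asr(R) ≤ k`: the absolute stable rank condition. -/
def ASRleq (R : Type*) [CommRing R] (k : ℕ) : Prop :=
  ∀ m : ℕ, k ≤ m → ∀ a : Fin (m + 1) → R,
    ∃ b : Fin m → R,
      Lideal R (fun i : Fin m => a i.castSucc + b i * a (Fin.last m)) = Lideal R a

/-- The set of elementary transvections `1 + t·E i j`, `i ≠ j`, viewed inside `GL`. -/
def ElemGen (R : Type*) [CommRing R] (ι : Type*) [Fintype ι] [DecidableEq ι] :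
    Set (Matrix ι ι R)ˣ :=
  {u | ∃ i j : ι, i ≠ j ∧ ∃ t : R, (u : Matrix ι ι R) = 1 + Matrix.single i j t}

/-- The elementary subgroup `E(ι, R) ≤ GL(ι, R)`. -/
def Esubgroup (R : Type*) [CommRing R] (ι : Type*) [Fintype ι] [DecidableEq ι] :
    Subgroup (Matrix ι ι R)ˣ :=
  Subgroup.closure (ElemGen R ι)

/-- Generators of `Ẽ(n, R)`: elementary transvections, mixed commutators `[a, g]` with
`a ∈ E(n,R)`, `g ∈ GL(n,R)`, and elements `(1 + xy)(1 + yx)⁻¹` with `y = diag(ξ,1,…,1)`. -/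
def EtildeGen (R : Type*) [CommRing R] (n : ℕ) : Set (Matrix (Fin n) (Fin n) R)ˣ :=
  ElemGen R (Fin n) ∪
  {w | ∃ a ∈ Esubgroup R (Fin n), ∃ g : (Matrix (Fin n) (Fin n) R)ˣ,
        w = a * g * a⁻¹ * g⁻¹} ∪
  {w | ∃ (ξ : R) (x : Matrix (Fin n) (Fin n) R) (p q : (Matrix (Fin n) (Fin n) R)ˣ),
        (p : Matrix (Fin n) (Fin n) R)
          = 1 + x * Matrix.diagonal (fun i : Fin n => if (i : ℕ) = 0 then ξ else 1) ∧
        (q : Matrix (Fin n) (Fin n) R)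
          = 1 + Matrix.diagonal (fun i : Fin n => if (i : ℕ) = 0 then ξ else 1) * x ∧
        w = p * q⁻¹}

/-- `Ẽ(n, R)`: the normal closure in `GL(n, R)` of the subgroup generated by `EtildeGen`. -/
def Etilde (R : Type*) [CommRing R] (n : ℕ) : Subgroup (Matrix (Fin n) (Fin n) R)ˣ :=
  Subgroup.normalClosure (EtildeGen R n)

/-- Stabilization `GL(n,R) → GL(n+1,R)`, `g ↦ diag(g, 1)`. -/
def stabGL (R : Type*) [CommRing R] {n : ℕ} (g : (Matrix (Fin n) (Fin n) R)ˣ) :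
    (Matrix (Fin (n + 1)) (Fin (n + 1)) R)ˣ where
  val := (fromBlocks g.val 0 0 (1 : Matrix (Fin 1) (Fin 1) R)).submatrix
      finSumFinEquiv.symm finSumFinEquiv.symm
  inv := (fromBlocks g.inv 0 0 (1 : Matrix (Fin 1) (Fin 1) R)).submatrix
      finSumFinEquiv.symm finSumFinEquiv.symm
  val_inv := by
    rw [Matrix.submatrix_mul_equiv, Matrix.fromBlocks_multiply]
    simp [g.val_inv]
  inv_val := by
    rw [Matrix.submatrix_mul_equiv, Matrix.fromBlocks_multiply]
    simp [g.inv_val]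

/-- Generators of the elementary symplectic group, with indices restricted to `S`. -/
def spGen (R : Type*) [CommRing R] {ι : Type*} [DecidableEq ι] (S : Set ι) :
    Set (Matrix (ι ⊕ ι) (ι ⊕ ι) R) :=
  {x | ∃ t : R,
    (∃ i ∈ S, x = 1 + Matrix.single (Sum.inl i) (Sum.inr i) t) ∨
    (∃ i ∈ S, x = 1 + Matrix.single (Sum.inr i) (Sum.inl i) t) ∨
    (∃ i ∈ S, ∃ j ∈ S, i ≠ j ∧
      x = 1 + (Matrix.single (Sum.inl i) (Sum.inl j) t
             - Matrix.single (Sum.inr j) (Sum.inr i) t)) ∨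
    (∃ i ∈ S, ∃ j ∈ S, i ≠ j ∧
      x = 1 + (Matrix.single (Sum.inl i) (Sum.inr j) t
             + Matrix.single (Sum.inl j) (Sum.inr i) t)) ∨
    (∃ i ∈ S, ∃ j ∈ S, i ≠ j ∧
      x = 1 + (Matrix.single (Sum.inr i) (Sum.inl j) t
             + Matrix.single (Sum.inr j) (Sum.inl i) t))}

/-- The elementary symplectic group `Ep` (with indices restricted to `S`),
as a subgroup of `GL(ι ⊕ ι, R)`. -/
def EpS (R : Type*) [CommRing R] (ι : Type*) [Fintype ι] [DecidableEq ι] (S : Set ι) :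
    Subgroup (Matrix (ι ⊕ ι) (ι ⊕ ι) R)ˣ :=
  Subgroup.closure
    {u : (Matrix (ι ⊕ ι) (ι ⊕ ι) R)ˣ | (u : Matrix (ι ⊕ ι) (ι ⊕ ι) R) ∈ spGen R S}

/-- The matrix `J = (0 I; -I 0)`. -/
def Jmat (R : Type*) [CommRing R] (ι : Type*) [DecidableEq ι] : Matrix (ι ⊕ ι) (ι ⊕ ι) R :=
  fromBlocks 0 1 (-1) 0

/-- `x` is symplectic: `xᵀ J x = J`. -/
def IsSymplectic (R : Type*) [CommRing R] {ι : Type*} [Fintype ι] [DecidableEq ι]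
    (x : Matrix (ι ⊕ ι) (ι ⊕ ι) R) : Prop :=
  xᵀ * Jmat R ι * x = Jmat R ι

/-- The hyperbolic embedding `H(g) = diag(g, (gᵀ)⁻¹)`. -/
def Hyp (R : Type*) [CommRing R] {ι : Type*} [Fintype ι] [DecidableEq ι]
    (g : (Matrix ι ι R)ˣ) : (Matrix (ι ⊕ ι) (ι ⊕ ι) R)ˣ where
  val := fromBlocks g.val 0 0 g.invᵀ
  inv := fromBlocks g.inv 0 0 g.valᵀ
  val_inv := by
    rw [Matrix.fromBlocks_multiply]
    simp [← Matrix.transpose_mul, g.val_inv, g.inv_val]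
  inv_val := by
    rw [Matrix.fromBlocks_multiply]
    simp [← Matrix.transpose_mul, g.val_inv, g.inv_val]

/-- `diag(1, g)` as an element of `GL(l + 1, R)`. -/
def diagOneGL (R : Type*) [CommRing R] {l : ℕ} (g : (Matrix (Fin l) (Fin l) R)ˣ) :
    (Matrix (Fin (l + 1)) (Fin (l + 1)) R)ˣ where
  val := (fromBlocks (1 : Matrix (Fin 1) (Fin 1) R) 0 0 g.val).submatrix
      (finSumFinEquiv.trans (finCongr (Nat.add_comm 1 l))).symm
      (finSumFinEquiv.trans (finCongr (Nat.add_comm 1 l))).symm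
  inv := (fromBlocks (1 : Matrix (Fin 1) (Fin 1) R) 0 0 g.inv).submatrix
      (finSumFinEquiv.trans (finCongr (Nat.add_comm 1 l))).symm
      (finSumFinEquiv.trans (finCongr (Nat.add_comm 1 l))).symm
  val_inv := by
    rw [Matrix.submatrix_mul_equiv, Matrix.fromBlocks_multiply]
    simp [g.val_inv]
    exact Matrix.submatrix_one _ (finSumFinEquiv.symm.injective.comp (finCongr _).injective)
  inv_val := by
    rw [Matrix.submatrix_mul_equiv, Matrix.fromBlocks_multiply]
    simp [g.inv_val]
    exact Matrix.submatrix_one _ (finSumFinEquiv.symm.injective.comp (finCongr _).injective)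

/-- `U(2l, R)`: symplectic matrices with zero lower-left block and
upper unitriangular upper-left block. -/
def Upos (R : Type*) [CommRing R] (l : ℕ) :
    Set (Matrix (Fin l ⊕ Fin l) (Fin l ⊕ Fin l) R) :=
  {x | IsSymplectic R x ∧ (∀ i j, x (Sum.inr i) (Sum.inl j) = 0) ∧
       (∀ i j : Fin l, j < i → x (Sum.inl i) (Sum.inl j) = 0) ∧
       (∀ i, x (Sum.inl i) (Sum.inl i) = 1)}

/-- `U⁻(2l, R)`: symplectic matrices with zero upper-right block and
lower unitriangular upper-left block. -/
def Uneg (R : Type*) [CommRing R] (l : ℕ) :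
    Set (Matrix (Fin l ⊕ Fin l) (Fin l ⊕ Fin l) R) :=
  {x | IsSymplectic R x ∧ (∀ i j, x (Sum.inl i) (Sum.inr j) = 0) ∧
       (∀ i j : Fin l, i < j → x (Sum.inl i) (Sum.inl j) = 0) ∧
       (∀ i, x (Sum.inl i) (Sum.inl i) = 1)}

section AuxLemmas

variable {R : Type*} [CommRing R] {ι : Type*} [Fintype ι] [DecidableEq ι]

/-- Unipotent unit from a square-zero matrix. -/
def unip (N : Matrix ι ι R) (hN : N * N = 0) : (Matrix ι ι R)ˣ where
  val := 1 + N
  inv := 1 - N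
  val_inv := by
    have h : (1 + N) * (1 - N) = 1 - N * N := by noncomm_ring
    rw [h, hN, sub_zero]
  inv_val := by
    have h : (1 - N) * (1 + N) = 1 - N * N := by noncomm_ring
    rw [h, hN, sub_zero]

@[simp] lemma unip_val (N : Matrix ι ι R) (hN : N * N = 0) : (unip N hN).val = 1 + N := rfl

@[simp] lemma unip_inv (N : Matrix ι ι R) (hN : N * N = 0) : (unip N hN).inv = 1 - N := rfl

/-- A unit whose value is `1 + ∑ₖ E_{f k, j}` (all rows distinct from `j`)
lies in the elementary subgroup. -/
lemma col_mem {κ : Type*} (f : κ → ι) (j : ι) (c : κ → R) (s : Finset κ) :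
    (∀ k ∈ s, f k ≠ j) →
    ∃ u ∈ Esubgroup R ι,
      (u : Matrix ι ι R) = 1 + ∑ k ∈ s, Matrix.single (f k) j (c k) := by
  classical
  induction s using Finset.induction_on with
  | empty => exact fun _ => ⟨1, one_mem _, by simp⟩
  | @insert a s ha ih =>
    intro hj
    obtain ⟨u, hu, huval⟩ := ih fun k hk => hj k (Finset.mem_insert_of_mem hk)
    have hfa : f a ≠ j := hj a (Finset.mem_insert_self a s)
    have hsq : Matrix.single (f a) j (c a) * Matrix.single (f a) j (c a) = 0 :=
      Matrix.single_mul_single_of_ne _ _ _ _ hfa.symm _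
    refine ⟨unip _ hsq * u,
      mul_mem (Subgroup.subset_closure ⟨f a, j, hfa, c a, rfl⟩) hu, ?_⟩
    rw [Units.val_mul, huval, unip_val, Finset.sum_insert ha]
    rw [mul_add, mul_one, add_mul, one_mul, Finset.mul_sum]
    rw [Finset.sum_eq_zero fun k hk =>
      (Matrix.single_mul_single_of_ne _ _ _ _ (hj k (Finset.mem_insert_of_mem hk)).symm _ :
        Matrix.single (f a) j (c a) * Matrix.single (f k) j (c k) = 0)]
    abel

/-- A unit whose value is `1 + ∑ₖ E_{i, g k}` (all columns distinct from `i`)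
lies in the elementary subgroup. -/
lemma row_mem {κ : Type*} (i : ι) (g : κ → ι) (c : κ → R) (s : Finset κ) :
    (∀ k ∈ s, g k ≠ i) →
    ∃ u ∈ Esubgroup R ι,
      (u : Matrix ι ι R) = 1 + ∑ k ∈ s, Matrix.single i (g k) (c k) := by
  classical
  induction s using Finset.induction_on with
  | empty => exact fun _ => ⟨1, one_mem _, by simp⟩
  | @insert a s ha ih =>
    intro hj
    obtain ⟨u, hu, huval⟩ := ih fun k hk => hj k (Finset.mem_insert_of_mem hk)
    have hga : g a ≠ i := hj a (Finset.mem_insert_self a s)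
    have hsq : Matrix.single i (g a) (c a) * Matrix.single i (g a) (c a) = 0 :=
      Matrix.single_mul_single_of_ne _ _ _ _ hga _
    refine ⟨unip _ hsq * u,
      mul_mem (Subgroup.subset_closure ⟨i, g a, hga.symm, c a, rfl⟩) hu, ?_⟩
    rw [Units.val_mul, huval, unip_val, Finset.sum_insert ha]
    rw [mul_add, mul_one, add_mul, one_mul, Finset.mul_sum]
    rw [Finset.sum_eq_zero fun k hk =>
      (Matrix.single_mul_single_of_ne _ _ _ _ hga _ :
        Matrix.single i (g a) (c a) * Matrix.single i (g k) (c k) = 0)]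
    abel

end AuxLemmas
section AuxLemmas2

variable {R : Type*} [CommRing R] {ι : Type*} [Fintype ι] [DecidableEq ι]

lemma sum_std_mul_apply {κ : Type*} (s : Finset κ) (f : κ → ι) (jc : ι) (c : κ → R)
    (M : Matrix ι ι R) (i j : ι) :
    ((∑ k ∈ s, Matrix.single (f k) jc (c k)) * M) i j
      = ∑ k ∈ s, (if f k = i then c k * M jc j else 0) := by
  rw [Finset.sum_mul, Matrix.sum_apply]
  refine Finset.sum_congr rfl fun k _ => ?_
  by_cases hk : f k = i
  · subst hk; rw [if_pos rfl, Matrix.single_mul_apply_same]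
  · rw [if_neg hk, Matrix.single_mul_apply_of_ne _ _ _ _ _ (Ne.symm hk)]

lemma sum_std_row_mul_apply {κ : Type*} (s : Finset κ) (ic : ι) (g : κ → ι) (c : κ → R)
    (M : Matrix ι ι R) (j : ι) :
    ((∑ k ∈ s, Matrix.single ic (g k) (c k)) * M) ic j
      = ∑ k ∈ s, c k * M (g k) j := by
  rw [Finset.sum_mul, Matrix.sum_apply]
  exact Finset.sum_congr rfl fun k _ => Matrix.single_mul_apply_same _ _ _ _ _

/-- Every lower unitriangular matrix is a value of an element of the elementary subgroup. -/
lemma lowerTri_mem {n : ℕ} (M : Matrix (Fin n) (Fin n) R)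
    (hlt : ∀ i j : Fin n, i < j → M i j = 0) (hd : ∀ i, M i i = 1) :
    ∃ u ∈ Esubgroup R (Fin n), (u : Matrix (Fin n) (Fin n) R) = M := by
  classical
  suffices H : ∀ d k : ℕ, n ≤ k + d → ∀ M : Matrix (Fin n) (Fin n) R,
      (∀ i j : Fin n, i < j → M i j = 0) → (∀ i, M i i = 1) →
      (∀ j : Fin n, (j : ℕ) < k → ∀ i, i ≠ j → M i j = 0) →
      ∃ u ∈ Esubgroup R (Fin n), (u : Matrix (Fin n) (Fin n) R) = M by
    exact H n 0 (by omega) M hlt hd (by intro j hj; omega)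
  intro d
  induction d with
  | zero =>
    intro k hk M hlt hd hcol
    refine ⟨1, one_mem _, ?_⟩
    ext i j
    rcases eq_or_ne i j with rfl | hij
    · rw [Units.val_one, Matrix.one_apply_eq, hd]
    · rw [Units.val_one, Matrix.one_apply_ne hij, hcol j (by omega) i hij]
  | succ d ih =>
    intro k hk M hlt hd hcol
    by_cases hnk : n ≤ k + d
    · exact ih k hnk M hlt hd hcol
    have hkn : k < n := by omega
    set K : Fin n := ⟨k, hkn⟩ with hK
    set s : Finset (Fin n) := Finset.univ.filter fun i => K < i with hs
    set N : Matrix (Fin n) (Fin n) R := ∑ i ∈ s, Matrix.single i K (M i K) with hNdef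
    have hN : N * N = 0 := by
      rw [hNdef, Finset.sum_mul_sum]
      refine Finset.sum_eq_zero fun i _ => Finset.sum_eq_zero fun i' hi' => ?_
      have hKi' : K ≠ i' := (Finset.mem_filter.mp hi').2.ne
      exact Matrix.single_mul_single_of_ne _ _ _ _ hKi' _
    have hPmem : unip N hN ∈ Esubgroup R (Fin n) := by
      obtain ⟨w, hw, hwval⟩ := col_mem (fun i : Fin n => i) K (fun i => M i K) s
        (fun i hi => (Finset.mem_filter.mp hi).2.ne')
      have hEq : unip N hN = w := Units.ext (by rw [hwval, unip_val, hNdef])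
      rw [hEq]; exact hw
    set M' : Matrix (Fin n) (Fin n) R := (1 - N) * M with hM'
    have hNM : ∀ i j, (N * M) i j = if K < i then M i K * M K j else 0 := by
      intro i j
      rw [hNdef, sum_std_mul_apply, Finset.sum_ite_eq' s i fun i => M i K * M K j]
      simp [hs]
    have hM'app : ∀ i j, M' i j = M i j - (if K < i then M i K * M K j else 0) := by
      intro i j
      rw [hM', sub_mul, one_mul, Matrix.sub_apply, hNM]
    have hlt' : ∀ i j : Fin n, i < j → M' i j = 0 := by
      intro i j hij
      rw [hM'app, hlt i j hij]
      rcases lt_or_ge K i with h1 | h1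
      · rw [if_pos h1, hlt K j (h1.trans hij), mul_zero, sub_zero]
      · rw [if_neg (not_lt.mpr h1), sub_zero]
    have hd' : ∀ i, M' i i = 1 := by
      intro i
      rw [hM'app, hd]
      rcases lt_or_ge K i with h1 | h1
      · rw [if_pos h1, hlt K i h1, mul_zero, sub_zero]
      · rw [if_neg (not_lt.mpr h1), sub_zero]
    have hcol' : ∀ j : Fin n, (j : ℕ) < k + 1 → ∀ i, i ≠ j → M' i j = 0 := by
      intro j hj i hij
      rcases Nat.lt_succ_iff_lt_or_eq.mp hj with hj' | hj'
      · have hKj : K ≠ j := by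
          intro e
          rw [← e] at hj'
          exact lt_irrefl k hj'
        rw [hM'app, hcol j hj' i hij]
        rcases lt_or_ge K i with h1 | h1
        · rw [if_pos h1, hcol j hj' K hKj, mul_zero, sub_zero]
        · rw [if_neg (not_lt.mpr h1), sub_zero]
      · have hjK : j = K := Fin.val_injective hj'
        rw [hM'app, hjK, hd]
        rcases lt_or_ge K i with h1 | h1
        · rw [if_pos h1, mul_one, sub_self]
        · rw [if_neg (not_lt.mpr h1), hlt i K (lt_of_le_of_ne h1 (hjK ▸ hij)), sub_zero]
    obtain ⟨u', hu', hu'val⟩ := ih (k + 1) (by omega) M' hlt' hd' hcol'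
    refine ⟨unip N hN * u', mul_mem hPmem hu', ?_⟩
    rw [Units.val_mul, hu'val, unip_val, hM', ← mul_assoc]
    have h2 : (1 + N) * (1 - N) = 1 - N * N := by noncomm_ring
    rw [h2, hN, sub_zero, one_mul]

end AuxLemmas2
section AuxLemmas3

variable {R : Type*} [CommRing R] {ι : Type*} [Fintype ι] [DecidableEq ι]

lemma isSymplectic_mul {x y : Matrix (ι ⊕ ι) (ι ⊕ ι) R}
    (hx : IsSymplectic R x) (hy : IsSymplectic R y) : IsSymplectic R (x * y) := by
  unfold IsSymplectic at *
  rw [Matrix.transpose_mul]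
  calc yᵀ * xᵀ * Jmat R ι * (x * y) = yᵀ * (xᵀ * Jmat R ι * x) * y := by noncomm_ring
  _ = yᵀ * Jmat R ι * y := by rw [hx]
  _ = Jmat R ι := hy

lemma isSymplectic_hyp (g : (Matrix ι ι R)ˣ) : IsSymplectic R ((Hyp R g).val) := by
  show (Matrix.fromBlocks g.val 0 0 g.invᵀ)ᵀ * Jmat R ι * Matrix.fromBlocks g.val 0 0 g.invᵀ
      = Jmat R ι
  rw [Jmat, Matrix.fromBlocks_transpose, Matrix.fromBlocks_multiply, Matrix.fromBlocks_multiply]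
  rw [Matrix.fromBlocks_inj]
  refine ⟨by simp, ?_, ?_, by simp⟩
  · simp [← Matrix.transpose_mul, g.inv_val]
  · simp [g.inv_val]

lemma hyp_mul (g k : (Matrix ι ι R)ˣ) : Hyp R (g * k) = Hyp R g * Hyp R k := by
  apply Units.ext
  show Matrix.fromBlocks (g * k).val 0 0 ((g * k).inv)ᵀ
      = Matrix.fromBlocks g.val 0 0 g.invᵀ * Matrix.fromBlocks k.val 0 0 k.invᵀ
  rw [Matrix.fromBlocks_multiply]
  have h1 : (g * k).val = g.val * k.val := rfl
  have h2 : (g * k).inv = k.inv * g.inv := rfl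
  rw [h1, h2, Matrix.transpose_mul]
  simp

lemma hyp_one : Hyp R (1 : (Matrix ι ι R)ˣ) = 1 := by
  apply Units.ext
  show Matrix.fromBlocks (1 : (Matrix ι ι R)ˣ).val 0 0 ((1 : (Matrix ι ι R)ˣ).inv)ᵀ = 1
  have h1 : (1 : (Matrix ι ι R)ˣ).val = 1 := rfl
  have h2 : (1 : (Matrix ι ι R)ˣ).inv = 1 := rfl
  rw [h1, h2, Matrix.transpose_one, Matrix.fromBlocks_one]

lemma upos_mul {l : ℕ} {x y : Matrix (Fin l ⊕ Fin l) (Fin l ⊕ Fin l) R}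
    (hx : x ∈ Upos R l) (hy : y ∈ Upos R l) : x * y ∈ Upos R l := by
  obtain ⟨hx1, hx2, hx3, hx4⟩ := hx
  obtain ⟨hy1, hy2, hy3, hy4⟩ := hy
  refine ⟨isSymplectic_mul hx1 hy1, ?_, ?_, ?_⟩
  · intro i j
    rw [Matrix.mul_apply, Fintype.sum_sum_type]
    rw [Finset.sum_eq_zero fun a _ => by rw [hx2 i a, zero_mul],
        Finset.sum_eq_zero fun b _ => by rw [hy2 b j, mul_zero], add_zero]
  · intro i j hij
    rw [Matrix.mul_apply, Fintype.sum_sum_type]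
    have h1 : ∀ a : Fin l, x (Sum.inl i) (Sum.inl a) * y (Sum.inl a) (Sum.inl j) = 0 := by
      intro a
      rcases lt_or_ge a i with hcase | hcase
      · rw [hx3 i a hcase, zero_mul]
      · rw [hy3 a j (lt_of_lt_of_le hij hcase), mul_zero]
    rw [Finset.sum_eq_zero fun a _ => h1 a,
        Finset.sum_eq_zero fun b _ => by rw [hy2 b j, mul_zero], add_zero]
  · intro i
    rw [Matrix.mul_apply, Fintype.sum_sum_type]
    have hz : ∑ b : Fin l, x (Sum.inl i) (Sum.inr b) * y (Sum.inr b) (Sum.inl i) = 0 :=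
      Finset.sum_eq_zero fun b _ => by rw [hy2 b i, mul_zero]
    rw [hz, add_zero]
    rw [Finset.sum_eq_single i]
    · rw [hx4, hy4, one_mul]
    · intro a _ ha
      rcases lt_or_gt_of_ne ha with hcase | hcase
      · rw [hx3 i a hcase, zero_mul]
      · rw [hy3 a i hcase, mul_zero]
    · intro hmem; exact absurd (Finset.mem_univ i) hmem

lemma unimodular_col (M : (Matrix ι ι R)ˣ) (j : ι) :
    Unimodular R (fun i => (M : Matrix ι ι R) i j) := by
  rw [Unimodular, Ideal.eq_top_iff_one]
  have h2 := congrArg (fun N : Matrix ι ι R => N j j) M.inv_val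
  have h1 : (1 : R) = ∑ i, M.inv j i * (M : Matrix ι ι R) i j := by
    simpa [Matrix.mul_apply, Matrix.one_apply] using h2.symm
  rw [h1]
  exact Ideal.sum_mem _ fun i _ =>
    Ideal.mul_mem_left _ _ (Ideal.subset_span ⟨i, rfl⟩)

end AuxLemmas3
/-- the reduction step in the proof of Proposition 3.1, case `Φ = C_l`;
`l = m + 1 ≥ 2`, `sr(R) ≤ l - 1 = m`. Every Dennis–Vaserstein decomposition
`u · v · H(h) · q` can be replaced by a reduced one `u' · v' · H(h') · q` with
`(h')_{l,1} = 0`. -/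
theorem statement9 (R : Type*) [CommRing R] (m : ℕ) (hm : 1 ≤ m) (hsr : SRleq R m)
    (u v q : (Matrix (Fin (m + 1) ⊕ Fin (m + 1)) (Fin (m + 1) ⊕ Fin (m + 1)) R)ˣ)
    (h : (Matrix (Fin (m + 1)) (Fin (m + 1)) R)ˣ)
    (hu : u.val ∈ Upos R (m + 1)) (hv : v.val ∈ Uneg R (m + 1))
    (hh : h ∈ Esubgroup R (Fin (m + 1))) (hq : q ∈ EpS R (Fin (m + 1)) Set.univ)
    (hq1 : q.val.mulVec (Pi.single (Sum.inl 0) 1) = Pi.single (Sum.inl 0) (1 : R)) :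
    ∃ (u' v' : (Matrix (Fin (m + 1) ⊕ Fin (m + 1)) (Fin (m + 1) ⊕ Fin (m + 1)) R)ˣ)
      (h' : (Matrix (Fin (m + 1)) (Fin (m + 1)) R)ˣ),
      u'.val ∈ Upos R (m + 1) ∧ v'.val ∈ Uneg R (m + 1) ∧
      h' ∈ Esubgroup R (Fin (m + 1)) ∧ h'.val (Fin.last m) 0 = 0 ∧
      u * v * Hyp R h * q = u' * v' * Hyp R h' * q := by
  classical
  obtain ⟨hvS, hvB, hvL, hvD⟩ := hv
  set A₁ : Matrix (Fin (m + 1)) (Fin (m + 1)) R := v.val.toBlocks₁₁ with hA₁def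
  have hA₁app : ∀ i j, A₁ i j = v.val (Sum.inl i) (Sum.inl j) := fun i j => rfl
  have hvblocks : v.val = fromBlocks A₁ 0 v.val.toBlocks₂₁ v.val.toBlocks₂₂ := by
    have hB : v.val.toBlocks₁₂ = 0 := by
      ext i j
      exact hvB i j
    conv_lhs => rw [← fromBlocks_toBlocks v.val]
    rw [hB]
  obtain ⟨A₁u, hA₁uE, hA₁uval⟩ := lowerTri_mem A₁
    (fun i j hij => by rw [hA₁app]; exact hvL i j hij)
    (fun i => by rw [hA₁app]; exact hvD i)
  set Km : Matrix (Fin (m + 1)) (Fin (m + 1)) R := (A₁u * h).val with hKm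
  set Kc : Fin (m + 1) → R := fun i => Km i 0 with hKc
  have hKuni : Unimodular R Kc := unimodular_col (A₁u * h) 0
  obtain ⟨b, hb⟩ := hsr m le_rfl Kc hKuni
  have hmem : -Kc (Fin.last m)
      ∈ Ideal.span (Set.range fun i : Fin m => Kc i.castSucc + b i * Kc (Fin.last m)) := by
    rw [hb]
    exact Submodule.mem_top
  obtain ⟨c, hc⟩ := (Submodule.mem_span_range_iff_exists_fun R).mp hmem
  set NS : Matrix (Fin (m + 1)) (Fin (m + 1)) R :=
      ∑ i : Fin m, Matrix.single i.castSucc (Fin.last m) (b i) with hNSdef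
  have hNS : NS * NS = 0 := by
    rw [hNSdef, Finset.sum_mul_sum]
    exact Finset.sum_eq_zero fun i _ => Finset.sum_eq_zero fun i' _ =>
      Matrix.single_mul_single_of_ne _ _ _ _ (Fin.castSucc_lt_last i').ne' _
  set Nt : Matrix (Fin (m + 1)) (Fin (m + 1)) R :=
      ∑ i : Fin m, Matrix.single (Fin.last m) i.castSucc (c i) with hNtdef
  have hNt : Nt * Nt = 0 := by
    rw [hNtdef, Finset.sum_mul_sum]
    exact Finset.sum_eq_zero fun i _ => Finset.sum_eq_zero fun i' _ =>
      Matrix.single_mul_single_of_ne _ _ _ _ (Fin.castSucc_lt_last i).ne _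
  set Su : (Matrix (Fin (m + 1)) (Fin (m + 1)) R)ˣ := unip NS hNS with hSudef
  set tu : (Matrix (Fin (m + 1)) (Fin (m + 1)) R)ˣ := unip Nt hNt with htudef
  have hSuE : Su ∈ Esubgroup R (Fin (m + 1)) := by
    obtain ⟨w, hw, hwval⟩ := col_mem (R := R) Fin.castSucc (Fin.last m) b Finset.univ
      (fun i _ => (Fin.castSucc_lt_last i).ne)
    have hEq : Su = w := Units.ext (by rw [hwval, hSudef, unip_val, hNSdef])
    rw [hEq]; exact hw
  have htuE : tu ∈ Esubgroup R (Fin (m + 1)) := by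
    obtain ⟨w, hw, hwval⟩ := row_mem (R := R) (Fin.last m) Fin.castSucc c Finset.univ
      (fun i _ => (Fin.castSucc_lt_last i).ne)
    have hEq : tu = w := Units.ext (by rw [hwval, htudef, unip_val, hNtdef])
    rw [hEq]; exact hw
  set h' : (Matrix (Fin (m + 1)) (Fin (m + 1)) R)ˣ := tu * Su * A₁u * h with hh'def
  set kU : (Matrix (Fin (m + 1)) (Fin (m + 1)) R)ˣ := h * h'⁻¹ with hkUdef
  have hSuval : (Su : Matrix (Fin (m + 1)) (Fin (m + 1)) R) = 1 + NS := rfl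
  have htuval : (tu : Matrix (Fin (m + 1)) (Fin (m + 1)) R) = 1 + Nt := rfl
  have htuinv : (tu⁻¹ : (Matrix (Fin (m + 1)) (Fin (m + 1)) R)ˣ).val = 1 - Nt := rfl
  have hSuinv : (Su⁻¹ : (Matrix (Fin (m + 1)) (Fin (m + 1)) R)ˣ).val = 1 - NS := rfl
  refine ⟨u * Hyp R Su⁻¹, Hyp R Su * v * Hyp R kU, h', ?_, ?_, ?_, ?_, ?_⟩
  · -- u' ∈ Upos
    rw [Units.val_mul]
    refine upos_mul hu ⟨isSymplectic_hyp _, ?_, ?_, ?_⟩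
    · intro i j
      show (fromBlocks (Su⁻¹ : (Matrix (Fin (m + 1)) (Fin (m + 1)) R)ˣ).val 0 0 ((Su⁻¹ : (Matrix (Fin (m + 1)) (Fin (m + 1)) R)ˣ).invᵀ))
          (Sum.inr i) (Sum.inl j) = 0
      rw [fromBlocks_apply₂₁]
      rfl
    · intro i j hij
      show (fromBlocks (Su⁻¹ : (Matrix (Fin (m + 1)) (Fin (m + 1)) R)ˣ).val 0 0 ((Su⁻¹ : (Matrix (Fin (m + 1)) (Fin (m + 1)) R)ˣ).invᵀ))
          (Sum.inl i) (Sum.inl j) = 0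
      rw [fromBlocks_apply₁₁, hSuinv, Matrix.sub_apply, Matrix.one_apply_ne hij.ne',
        hNSdef, Matrix.sum_apply]
      rw [Finset.sum_eq_zero fun k _ => Matrix.single_apply_of_col_ne _ _
        (lt_of_lt_of_le hij (Fin.le_last i)).ne' _]
      rw [sub_zero]
    · intro i
      show (fromBlocks (Su⁻¹ : (Matrix (Fin (m + 1)) (Fin (m + 1)) R)ˣ).val 0 0 ((Su⁻¹ : (Matrix (Fin (m + 1)) (Fin (m + 1)) R)ˣ).invᵀ))
          (Sum.inl i) (Sum.inl i) = 1
      rw [fromBlocks_apply₁₁, hSuinv, Matrix.sub_apply, Matrix.one_apply_eq,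
        hNSdef, Matrix.sum_apply]
      have hz : ∀ k : Fin m, Matrix.single k.castSucc (Fin.last m) (b k) i i = 0 := by
        intro k
        by_cases hi : i = Fin.last m
        · exact Matrix.single_apply_of_row_ne
            (by rw [hi]; exact (Fin.castSucc_lt_last k).ne) _ _ _
        · exact Matrix.single_apply_of_col_ne _ _ (Ne.symm hi) _
      rw [Finset.sum_eq_zero fun k _ => hz k, sub_zero]
  · -- v' ∈ Uneg
    have hUL : Su.val * A₁ * kU.val = (tu⁻¹ : (Matrix (Fin (m + 1)) (Fin (m + 1)) R)ˣ).val := by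
      have hq2 : Su * A₁u * kU = tu⁻¹ := by
        rw [hkUdef, hh'def]
        group
      rw [← hA₁uval]
      exact congrArg Units.val hq2
    have hval : (Hyp R Su * v * Hyp R kU).val
        = fromBlocks (tu⁻¹ : (Matrix (Fin (m + 1)) (Fin (m + 1)) R)ˣ).val 0
            (Su.invᵀ * v.val.toBlocks₂₁ * kU.val) (Su.invᵀ * v.val.toBlocks₂₂ * kU.invᵀ) := by
      have h1 : (Hyp R Su).val = fromBlocks Su.val 0 0 Su.invᵀ := rfl
      have h2 : (Hyp R kU).val = fromBlocks kU.val 0 0 kU.invᵀ := rfl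
      rw [Units.val_mul, Units.val_mul, h1, h2, hvblocks, fromBlocks_multiply,
        fromBlocks_multiply]
      simp only [Matrix.mul_zero, Matrix.zero_mul, add_zero, zero_add]
      rw [hUL, Matrix.toBlocks_fromBlocks₂₁, Matrix.toBlocks_fromBlocks₂₂]
    refine ⟨?_, ?_, ?_, ?_⟩
    · show IsSymplectic R ((Hyp R Su * v * Hyp R kU).val)
      rw [Units.val_mul, Units.val_mul]
      exact isSymplectic_mul (isSymplectic_mul (isSymplectic_hyp _) hvS) (isSymplectic_hyp _)
    · intro i j
      rw [hval, fromBlocks_apply₁₂]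
      rfl
    · intro i j hij
      rw [hval, fromBlocks_apply₁₁, htuinv, Matrix.sub_apply, Matrix.one_apply_ne hij.ne,
        hNtdef, Matrix.sum_apply]
      rw [Finset.sum_eq_zero fun k _ => Matrix.single_apply_of_row_ne
        (lt_of_lt_of_le hij (Fin.le_last j)).ne' _ _ _]
      rw [sub_zero]
    · intro i
      rw [hval, fromBlocks_apply₁₁, htuinv, Matrix.sub_apply, Matrix.one_apply_eq,
        hNtdef, Matrix.sum_apply]
      have hz : ∀ k : Fin m, Matrix.single (Fin.last m) k.castSucc (c k) i i = 0 := by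
        intro k
        by_cases hi : i = Fin.last m
        · exact Matrix.single_apply_of_col_ne _ _
            (by rw [hi]; exact (Fin.castSucc_lt_last k).ne) _
        · exact Matrix.single_apply_of_row_ne (Ne.symm hi) _ _ _
      rw [Finset.sum_eq_zero fun k _ => hz k, sub_zero]
  · -- h' ∈ Esubgroup
    exact mul_mem (mul_mem (mul_mem htuE hSuE) hA₁uE) hh
  · -- entry (last, 0) of h' is zero
    have hval' : (h' : Matrix (Fin (m + 1)) (Fin (m + 1)) R) = tu.val * (Su.val * Km) := by
      rw [hh'def, hKm]
      simp only [Units.val_mul, mul_assoc]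
    have hX : ∀ j : Fin (m + 1), (Su.val * Km) j 0 = Km j 0 + (NS * Km) j 0 := by
      intro j
      rw [hSuval, add_mul, one_mul, Matrix.add_apply]
    have hNSKm : ∀ i : Fin m, (NS * Km) (Fin.castSucc i) 0 = b i * Km (Fin.last m) 0 := by
      intro i
      rw [hNSdef, sum_std_mul_apply, Finset.sum_eq_single i]
      · rw [if_pos rfl]
      · intro k _ hk
        rw [if_neg fun e => hk (Fin.castSucc_injective m e)]
      · intro hmem'
        exact absurd (Finset.mem_univ i) hmem'
    have hNSKlast : (NS * Km) (Fin.last m) 0 = 0 := by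
      rw [hNSdef, sum_std_mul_apply]
      exact Finset.sum_eq_zero fun k _ => if_neg (Fin.castSucc_lt_last k).ne
    have hNtrow : (Nt * (Su.val * Km)) (Fin.last m) 0
        = ∑ i : Fin m, c i * (Su.val * Km) (Fin.castSucc i) 0 := by
      rw [hNtdef, sum_std_row_mul_apply]
    rw [hval', htuval, add_mul, one_mul, Matrix.add_apply, hNtrow,
      hX (Fin.last m), hNSKlast, add_zero]
    have hterm : ∀ i : Fin m, c i * (Su.val * Km) (Fin.castSucc i) 0
        = c i * (Kc i.castSucc + b i * Kc (Fin.last m)) := by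
      intro i
      rw [hX, hNSKm]
    rw [Finset.sum_congr rfl fun i _ => hterm i]
    have hc' : ∑ i : Fin m, c i * (Kc i.castSucc + b i * Kc (Fin.last m))
        = -Kc (Fin.last m) := by
      simpa [smul_eq_mul] using hc
    rw [hc']
    show Kc (Fin.last m) + -Kc (Fin.last m) = 0
    exact add_neg_cancel _
  · -- the decomposition equation
    have e1 : Hyp R kU * Hyp R h' = Hyp R h := by
      rw [← hyp_mul, hkUdef, inv_mul_cancel_right]
    have e2 : Hyp R Su⁻¹ * Hyp R Su = 1 := by
      rw [← hyp_mul, inv_mul_cancel, hyp_one]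
    calc u * v * Hyp R h * q
        = u * v * (Hyp R kU * Hyp R h') * q := by rw [e1]
    _ = u * Hyp R Su⁻¹ * (Hyp R Su * v * Hyp R kU) * Hyp R h' * q := by
        rw [show u * Hyp R Su⁻¹ * (Hyp R Su * v * Hyp R kU) * Hyp R h' * q
            = u * ((Hyp R Su⁻¹ * Hyp R Su) * (v * (Hyp R kU * Hyp R h' * q))) by group, e2]
        group
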